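/- Let X and Y be normed spaces with X a dense, continuously embedded subspace of Y, and suppose X is reflexive. Then the image of Y' under the restriction map is dense in X'. -/

import Mathlib

/-
Restriction `y' ↦ y' ∘ ι` is linear, so its range is a subspace of `X'`, and by Hahn–Banach it
is dense as soon as its annihilator in `X''` is trivial. By reflexivity every element of `X''`
is evaluation at some `x : X`; if it annihilates the range then `y' (ι x) = 0` for all `y' ∈ Y'`,
so `ι x = 0` and `x = 0` by injectivity.
-/

theorem LinearMap.apply_eq_zero_of_forall_mem_apply_lt {E : Type*} [AddCommGroup E]
    [Module ℝ E] (f : E →ₗ[ℝ] ℝ) {p : Submodule ℝ E} {u : ℝ} (hf : ∀ x ∈ p, f x < u)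
    {x : E} (hx : x ∈ p) : f x = 0 := by
  by_contra h
  have := hf ((u / f x) • x) (p.smul_mem _ hx)
  rw [map_smul, smul_eq_mul, div_mul_cancel₀ _ h] at this
  exact lt_irrefl _ this

theorem Submodule.dense_of_forall_strongDual_eq_zero {E : Type*} [AddCommGroup E] [Module ℝ E]
    [TopologicalSpace E] [IsTopologicalAddGroup E] [ContinuousSMul ℝ E] [LocallyConvexSpace ℝ E]
    (p : Submodule ℝ E) (h : ∀ f : StrongDual ℝ E, (∀ x ∈ p, f x = 0) → f = 0) :
    Dense (p : Set E) := by
  refine dense_iff_closure_eq.2 (Set.eq_univ_of_forall fun x => ?_)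
  by_contra hx
  rw [← p.topologicalClosure_coe] at hx
  obtain ⟨f, u, hfu, hux⟩ := geometric_hahn_banach_closed_point
    p.topologicalClosure.convex p.isClosed_topologicalClosure hx
  have hf : f = 0 := h f fun y hy =>
    (f : E →ₗ[ℝ] ℝ).apply_eq_zero_of_forall_mem_apply_lt hfu (p.le_topologicalClosure hy)
  have hu_pos : 0 < u := by simpa using hfu 0 (zero_mem _)
  have hu_neg : u < 0 := by simpa [hf] using hux
  exact lt_asymm hu_pos hu_neg

theorem stmt_11_general {X Y : Type*} [NormedAddCommGroup X] [NormedSpace ℝ X]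
    [NormedAddCommGroup Y] [NormedSpace ℝ Y]
    (hrefl : Function.Surjective (NormedSpace.inclusionInDoubleDual ℝ X))
    (ι : X →L[ℝ] Y) (hinj : Function.Injective ι) :
    Dense (Set.range (fun y' : StrongDual ℝ Y => y'.comp ι)) := by
  have hrange : Set.range (fun y' : StrongDual ℝ Y => y'.comp ι) =
      (ContinuousLinearMap.precomp ℝ ι : StrongDual ℝ Y →L[ℝ] StrongDual ℝ X).range := by
    rw [LinearMap.coe_range]; rfl
  rw [hrange]
  refine (LinearMap.range _).dense_of_forall_strongDual_eq_zero fun Φ hΦ => ?_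
  obtain ⟨x, rfl⟩ := hrefl Φ
  have hιx : ι x = 0 := SeparatingDual.eq_zero_of_forall_dual_eq_zero fun y' => hΦ _ ⟨y', rfl⟩
  rw [(map_eq_zero_iff ι hinj).1 hιx, map_zero]

/-- If `X` is a reflexive Banach space embedded continuously and densely in a Banach
space `Y` (via `ι`), then the image of `Y'` under the restriction map `y' ↦ y' ∘ ι` is
dense in `X'`. Reflexivity is expressed by surjectivity of the canonical inclusion of
`X` into its double dual. -/
theorem stmt_11 {X Y : Type*} [NormedAddCommGroup X] [NormedSpace ℝ X] [CompleteSpace X]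
    [NormedAddCommGroup Y] [NormedSpace ℝ Y] [CompleteSpace Y]
    (hrefl : Function.Surjective (NormedSpace.inclusionInDoubleDual ℝ X))
    (ι : X →L[ℝ] Y) (hinj : Function.Injective ι) (hdense : DenseRange ι) :
    Dense (Set.range (fun y' : StrongDual ℝ Y => y'.comp ι)) :=
  stmt_11_general hrefl ι hinj
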